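/- For δ ∈ (0,1) and every real x ∈ (0,1), G_δ(x) ≠ x; moreover G_δ'(x) > 0 for all x ∈ (0,∞). -/

import Mathlib

open Filter Topology

noncomputable def Gr (δ x : ℝ) : ℝ :=
  x ^ 2 * (x ^ 2 + 2 * x + (1 - δ)) / ((1 - δ) * x ^ 2 + 2 * x + 1)

theorem Gdelta_real_monotone (δ : ℝ) (hδ : δ ∈ Set.Ioo (0 : ℝ) 1) :
    (∀ x ∈ Set.Ioo (0 : ℝ) 1, Gr δ x ≠ x) ∧
    (∀ x : ℝ, 0 < x → 0 < deriv (Gr δ) x) := by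
  obtain ⟨hδ0, hδ1⟩ := hδ
  constructor
  · rintro x ⟨hx0, hx1⟩ h
    have hD : (1 - δ) * x ^ 2 + 2 * x + 1 > 0 := by nlinarith
    rw [Gr, div_eq_iff (ne_of_gt hD)] at h
    nlinarith [mul_pos (mul_pos hx0 (sub_pos.mpr hx1)) (show (0:ℝ) < x^2 + (2+δ)*x + 1 by nlinarith), sq_nonneg x]
  · intro x hx
    have hD : (1 - δ) * x ^ 2 + 2 * x + 1 > 0 := by nlinarith
    have hN : HasDerivAt (fun y : ℝ => y ^ 2 * (y ^ 2 + 2 * y + (1 - δ)))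
        (2 * x * (x ^ 2 + 2 * x + (1 - δ)) + x ^ 2 * (2 * x + 2)) x := by
      have h1 : HasDerivAt (fun y : ℝ => y ^ 2) (2 * x) x := by
        simpa using (hasDerivAt_pow 2 x)
      have h2 : HasDerivAt (fun y : ℝ => y ^ 2 + 2 * y + (1 - δ)) (2 * x + 2) x := by
        have := ((hasDerivAt_pow 2 x).add ((hasDerivAt_id x).const_mul 2)).add_const (1 - δ)
        simpa using this
      exact h1.mul h2
    have hDd : HasDerivAt (fun y : ℝ => (1 - δ) * y ^ 2 + 2 * y + 1)
        (2 * (1 - δ) * x + 2) x := by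
      have := (((hasDerivAt_pow 2 x).const_mul (1 - δ)).add ((hasDerivAt_id x).const_mul 2)).add_const 1
      simpa [mul_comm, mul_assoc, mul_left_comm] using this
    have hG : HasDerivAt (Gr δ)
        (((2 * x * (x ^ 2 + 2 * x + (1 - δ)) + x ^ 2 * (2 * x + 2)) * ((1 - δ) * x ^ 2 + 2 * x + 1)
          - x ^ 2 * (x ^ 2 + 2 * x + (1 - δ)) * (2 * (1 - δ) * x + 2))
          / ((1 - δ) * x ^ 2 + 2 * x + 1) ^ 2) x := by
      exact hN.div hDd (ne_of_gt hD)
    rw [hG.deriv]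
    apply div_pos
    · nlinarith [pow_pos hx 5, pow_pos hx 4, pow_pos hx 3, pow_pos hx 2, mul_pos hδ0 (pow_pos hx 5), mul_pos hδ0 (pow_pos hx 4), mul_pos hδ0 hx, mul_pos (sub_pos.mpr hδ1) (pow_pos hx 5), mul_pos (sub_pos.mpr hδ1) hx]
    · positivity
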